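/- Let Δ = 1/K for a positive integer K, and consider the uniform quantization grid {Δ/2, 3Δ/2, …, 1 − Δ/2} of [0,1], of size 1/Δ. Assume that with probability at least 1−δ over the i.i.d. sample S of size N, all graph clustering models whose cluster-level predictions take values in the grid satisfy the bound kl(L̂‖L) ≤ [ |X| Ī(X;C) + |C| ln|X| + |C|² ln(1/Δ) + (1/2) ln(4N) − ln δ ] / N (the grid-valued version of the PAC-Bayesian graph clustering bound). Then, with probability at least 1−δ over S, simultaneously for all graph clustering models Q = (q(C|X), g) with arbitrary continuous cluster-level predictions g : C × C → [0,1] and quadratic loss: L(Q) ≤ kl⁻¹( L̂(Q) + Δ + Δ²/4 , [ |X| · Ī(X;C) + |C| ln|X| − |C|² ln Δ + (1/2) ln(4N/δ²) ] / N ) + Δ + Δ²/4. -/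

import Mathlib

open MeasureTheory

/-- Bernoulli KL divergence `kl(p‖q)`, with the conventions `0 ln 0 = 0` and
`kl(p‖q) = +∞` when `q ∈ {0,1}` unless `p = q`. -/
noncomputable def klBer (p q : ℝ) : EReal :=
  if q = 0 then (if p = 0 then (0 : EReal) else ⊤)
  else if q = 1 then (if p = 1 then (0 : EReal) else ⊤)
  else (((p * Real.log (p / q) + (1 - p) * Real.log ((1 - p) / (1 - q))) : ℝ) : EReal)

/-- The inverse KL divergence `kl⁻¹(p̂, B) = max { z ∈ [0,1] : kl(p̂‖z) ≤ B }`. -/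
noncomputable def klInv (phat B : ℝ) : ℝ :=
  sSup {z : ℝ | z ∈ Set.Icc (0 : ℝ) 1 ∧ klBer phat z ≤ (B : EReal)}

/-- The mutual information `Ī(X;C)` of the joint distribution `q̄(x,c) = q(c|x)/|X|`
(uniform marginal over `X`). -/
noncomputable def barMI {X : Type*} [Fintype X] {nC : ℕ} (q : X → Fin nC → ℝ) : ℝ :=
  (1 / (Fintype.card X : ℝ)) *
    ∑ x : X, ∑ c : Fin nC,
      q x c * Real.log (q x c / ((1 / (Fintype.card X : ℝ)) * ∑ x' : X, q x' c))

/-!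
Round every cluster-level prediction `g(c₁, c₂)` to the midpoint of its grid cell. For the
quadratic loss with values in `[0,1]` this moves both the empirical and the expected loss by at
most `ε = Δ + Δ²/4`, so the grid-valued bound `kl(L̂(Q̃) ‖ L(Q̃)) ≤ B` for the rounded model `Q̃`
gives `L(Q) ≤ L(Q̃) + ε ≤ kl⁻¹(L̂(Q̃), B) + ε ≤ kl⁻¹(L̂(Q) + ε, B) + ε`; the last step holds
because `kl(· ‖ z)` decreases on `[0, z]`, which is the convexity of `t ↦ t log t + 1 - t`.
-/

open Real Set Filter Topology InformationTheory

lemma antitoneOn_klFun : AntitoneOn klFun (Icc 0 1) := fun x hx y hy hxy => by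
  have h := convexOn_klFun.le_on_segment hx.1 (zero_le_one' ℝ)
    (by rw [segment_eq_Icc hx.2]; exact ⟨hxy, hy.2⟩)
  rwa [klFun_one, max_eq_left (klFun_nonneg hx.1)] at h

lemma monotoneOn_klFun : MonotoneOn klFun (Ici 1) := fun x hx y hy hxy => by
  have hy0 : (0 : ℝ) ≤ y := zero_le_one.trans hy
  have h := convexOn_klFun.le_on_segment (zero_le_one' ℝ) hy0
    (by rw [segment_eq_Icc hy]; exact ⟨hx, hxy⟩)
  rwa [klFun_one, max_eq_right (klFun_nonneg hy0)] at h

lemma klBer_of_mem_Ioo {q : ℝ} (hq : q ∈ Ioo 0 1) (p : ℝ) :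
    klBer p q = ((p * log (p / q) + (1 - p) * log ((1 - p) / (1 - q)) : ℝ) : EReal) := by
  rw [klBer, if_neg hq.1.ne', if_neg hq.2.ne]

lemma klBer_eq_klFun {q : ℝ} (hq : q ∈ Ioo 0 1) (p : ℝ) :
    klBer p q = ((q * klFun (p / q) + (1 - q) * klFun ((1 - p) / (1 - q)) : ℝ) : EReal) := by
  have e₁ : q * (p / q) = p := mul_div_cancel₀ p hq.1.ne'
  have e₂ : (1 - q) * ((1 - p) / (1 - q)) = 1 - p := mul_div_cancel₀ _ (sub_ne_zero.2 hq.2.ne')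
  rw [klBer_of_mem_Ioo hq, klFun_apply, klFun_apply, EReal.coe_eq_coe_iff]
  linear_combination (1 - log (p / q)) * e₁ + (1 - log ((1 - p) / (1 - q))) * e₂

lemma klBer_self (q : ℝ) : klBer q q = 0 := by
  unfold klBer
  split_ifs with h0 h1 <;> try rfl
  rw [div_self h0, div_self (sub_ne_zero.2 (Ne.symm h1)), log_one]
  norm_num

lemma klBer_nonneg {p q : ℝ} (hp : p ∈ Icc 0 1) (hq : q ∈ Icc 0 1) : 0 ≤ klBer p q := by
  rcases eq_or_lt_of_le hq.1 with rfl | hq0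
  · simp only [klBer, if_true]; split_ifs <;> simp
  rcases eq_or_lt_of_le hq.2 with rfl | hq1
  · simp only [klBer, one_ne_zero, if_false, if_true]; split_ifs <;> simp
  rw [klBer_eq_klFun ⟨hq0, hq1⟩, ← EReal.coe_zero, EReal.coe_le_coe_iff]
  have h1q : 0 < 1 - q := sub_pos.2 hq1
  exact add_nonneg (mul_nonneg hq0.le (klFun_nonneg (div_nonneg hp.1 hq0.le)))
    (mul_nonneg h1q.le (klFun_nonneg (div_nonneg (sub_nonneg.2 hp.2) h1q.le)))

lemma antitoneOn_klBer {q : ℝ} (hq : q ∈ Ioo 0 1) :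
    AntitoneOn (fun p => klBer p q) (Icc 0 q) := fun p hp p' hp' hpp' => by
  have h1q : 0 < 1 - q := sub_pos.2 hq.2
  simp only [klBer_eq_klFun hq, EReal.coe_le_coe_iff]
  gcongr ?_ + ?_
  · exact mul_le_mul_of_nonneg_left
      (antitoneOn_klFun ⟨div_nonneg hp.1 hq.1.le, div_le_one_of_le₀ hp.2 hq.1.le⟩
        ⟨div_nonneg hp'.1 hq.1.le, div_le_one_of_le₀ hp'.2 hq.1.le⟩
        (div_le_div_of_nonneg_right hpp' hq.1.le)) hq.1.le
  · exact mul_le_mul_of_nonneg_left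
      (monotoneOn_klFun ((one_le_div h1q).2 (by linarith [hp'.2]))
        ((one_le_div h1q).2 (by linarith [hp.2]))
        (div_le_div_of_nonneg_right (by linarith) h1q.le)) h1q.le

/-- Off its intended domain, for `p > 1` (reached when `L̂ + ε > 1`), the real formula for
`kl(p ‖ z)` tends to `-∞` as `z → 1⁻`; hence `kl⁻¹(p, B) = 1` there. -/
lemma eventually_klBer_one_sub_le {p : ℝ} (hp : 1 < p) (B : ℝ) :
    ∀ᶠ t in 𝓝[>] 0, klBer p (1 - t) ≤ B := by
  have hlim : Tendsto (fun t => p * log (p / (1 - t)) + ((1 - p) * log (1 - p) + (p - 1) * log t))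
      (𝓝[>] 0) atBot := by
    have hcont : ContinuousAt (fun t => p * log (p / (1 - t))) 0 := by
      fun_prop (disch := norm_num <;> linarith)
    exact (hcont.tendsto.mono_left nhdsWithin_le_nhds).add_atBot
      (tendsto_atBot_add_const_left _ _ (tendsto_log_nhdsGT_zero.const_mul_atBot (by linarith)))
  filter_upwards [hlim.eventually_le_atBot B, Ioo_mem_nhdsGT one_pos] with t hB ht
  rw [klBer_of_mem_Ioo ⟨by linarith [ht.2], by linarith [ht.1]⟩, EReal.coe_le_coe_iff,
    sub_sub_cancel, log_div (by linarith) ht.1.ne']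
  linarith

lemma le_klInv_of_klBer_le {p z B : ℝ} (hz : z ∈ Icc 0 1) (h : klBer p z ≤ B) :
    z ≤ klInv p B :=
  le_csSup ⟨1, fun _ hw => hw.1.2⟩ ⟨hz, h⟩

lemma one_le_klInv {p : ℝ} (hp : 1 < p) (B : ℝ) : 1 ≤ klInv p B := by
  refine le_of_forall_lt fun y hy => ?_
  obtain ⟨t, hB, ht⟩ := ((eventually_klBer_one_sub_le hp B).and
    (Ioo_mem_nhdsGT (lt_min one_pos (sub_pos.2 hy)))).exists
  have ht1 : t < 1 := ht.2.trans_le (min_le_left _ _)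
  have hty : t < 1 - y := ht.2.trans_le (min_le_right _ _)
  exact (lt_sub_comm.1 hty).trans_le
    (le_klInv_of_klBer_le ⟨by linarith, by linarith [ht.1]⟩ hB)

theorem le_klInv {p p' z B : ℝ} (hp : p ∈ Icc 0 1) (hz : z ∈ Icc 0 1) (hpp' : p ≤ p')
    (h : klBer p z ≤ B) : z ≤ klInv p' B := by
  rcases lt_or_ge p' z with hp'z | hzp'
  · have hz1 : z ≠ 1 := by
      rintro rfl
      have hp1 : p ≠ 1 := by linarith
      simp [klBer, hp1] at h
    have hz' : z ∈ Ioo 0 1 := ⟨(hp.1.trans hpp').trans_lt hp'z, lt_of_le_of_ne hz.2 hz1⟩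
    exact le_klInv_of_klBer_le hz <| (antitoneOn_klBer hz' ⟨hp.1, hpp'.trans hp'z.le⟩
      ⟨hp.1.trans hpp', hp'z.le⟩ hpp').trans h
  rcases le_or_gt p' 1 with hp'1 | hp'1
  · refine hzp'.trans (le_klInv_of_klBer_le ⟨hp.1.trans hpp', hp'1⟩ ?_)
    rw [klBer_self]
    exact (klBer_nonneg hp hz).trans h
  · exact hz.2.trans (one_le_klInv hp'1 B)

lemma exists_abs_sub_cell_midpoint_le {K : ℕ} (hK : 0 < K) {Δ : ℝ} (hΔ : Δ = 1 / K) {x : ℝ}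
    (hx : x ∈ Icc 0 1) : ∃ j : Fin K, |x - (2 * (j : ℝ) + 1) * Δ / 2| ≤ Δ / 2 := by
  have hK' : (0 : ℝ) < K := Nat.cast_pos.2 hK
  have hΔ₀ : 0 < Δ := hΔ ▸ by positivity
  have hKΔ : (K : ℝ) * Δ = 1 := by rw [hΔ, mul_one_div_cancel hK'.ne']
  have hxK : 0 ≤ x * K := mul_nonneg hx.1 hK'.le
  refine ⟨⟨min ⌊x * K⌋₊ (K - 1), by omega⟩, ?_⟩
  set m : ℕ := min ⌊x * K⌋₊ (K - 1)
  have hlow : (m : ℝ) ≤ x * K := (Nat.cast_le.2 (min_le_left _ _)).trans (Nat.floor_le hxK)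
  have hup : x * K ≤ m + 1 := by
    rcases min_choice ⌊x * K⌋₊ (K - 1) with h | h <;> simp only [m, h]
    · exact (Nat.lt_floor_add_one _).le
    · rw [Nat.cast_sub hK, Nat.cast_one, sub_add_cancel]
      nlinarith [hx.2]
  have hdist : x - (2 * (m : ℝ) + 1) * Δ / 2 = (x * K - m - 1 / 2) * Δ := by
    linear_combination (-x) * hKΔ
  have hcell : |x * K - m - 1 / 2| ≤ 1 / 2 := abs_le.2 ⟨by linarith, by linarith⟩
  rw [hdist, abs_mul, abs_of_pos hΔ₀]
  nlinarith

lemma cell_midpoint_mem_Icc {K : ℕ} {Δ : ℝ} (hΔ : Δ = 1 / K) (j : Fin K) :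
    (2 * (j : ℝ) + 1) * Δ / 2 ∈ Icc 0 1 := by
  have hK : (0 : ℝ) < K := Nat.cast_pos.2 j.pos
  have hΔ₀ : 0 < Δ := hΔ ▸ by positivity
  have hKΔ : (K : ℝ) * Δ = 1 := by rw [hΔ, mul_one_div_cancel hK.ne']
  have hj : (j : ℝ) + 1 ≤ K := by exact_mod_cast j.isLt
  constructor
  · positivity
  · nlinarith [mul_le_mul_of_nonneg_right hj hΔ₀.le]

lemma sq_sub_le_sq_sub_add {w g g' Δ : ℝ} (hw : |w - g'| ≤ 1) (hg : |g - g'| ≤ Δ / 2) :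
    (w - g) ^ 2 ≤ (w - g') ^ 2 + (Δ + Δ ^ 2 / 4) := by
  have hcross : (w - g') * (g' - g) ≤ Δ / 2 := by
    calc (w - g') * (g' - g) ≤ |w - g'| * |g' - g| := by rw [← abs_mul]; exact le_abs_self _
      _ ≤ 1 * (Δ / 2) := by rw [abs_sub_comm g']; gcongr
      _ = Δ / 2 := one_mul _
  have hsq : (g' - g) ^ 2 ≤ (Δ / 2) ^ 2 := by
    rw [← sq_abs, abs_sub_comm]; exact pow_le_pow_left₀ (abs_nonneg _) hg 2
  nlinarith

section Averages

lemma mean_le_mean_add {N : ℕ} (hN : 0 < N) {f f' : Fin N → ℝ} {ε : ℝ}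
    (h : ∀ t, f t ≤ f' t + ε) : 1 / (N : ℝ) * ∑ t, f t ≤ 1 / (N : ℝ) * ∑ t, f' t + ε := by
  have hN' : (N : ℝ) ≠ 0 := Nat.cast_ne_zero.2 hN.ne'
  calc 1 / (N : ℝ) * ∑ t, f t ≤ 1 / (N : ℝ) * ∑ t, (f' t + ε) := by gcongr with t; exact h t
    _ = 1 / (N : ℝ) * ∑ t, f' t + ε := by
      rw [Finset.sum_add_distrib, Finset.sum_const, Finset.card_univ, Fintype.card_fin,
        nsmul_eq_mul, mul_add, one_div, inv_mul_cancel_left₀ hN']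

lemma mean_mem_Icc {N : ℕ} (hN : 0 < N) {f : Fin N → ℝ} (h : ∀ t, f t ∈ Icc 0 1) :
    1 / (N : ℝ) * ∑ t, f t ∈ Icc 0 1 :=
  ⟨mul_nonneg (by positivity) (Finset.sum_nonneg fun t _ => (h t).1),
    (mul_le_mul_of_nonneg_left (Finset.sum_le_sum fun t _ => (h t).2) (by positivity)).trans_eq
      (by simp [hN.ne'])⟩

variable {Ω : Type*} [MeasurableSpace Ω] {μ : Measure Ω} [IsProbabilityMeasure μ] {f f' : Ω → ℝ}

lemma integral_le_integral_add {ε : ℝ} (hf : Integrable f μ) (hf' : Integrable f' μ)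
    (h : ∀ ω, f ω ≤ f' ω + ε) : ∫ ω, f ω ∂μ ≤ ∫ ω, f' ω ∂μ + ε :=
  (integral_mono hf (hf'.add (integrable_const ε)) h).trans_eq
    (by simp only [Pi.add_apply]; rw [integral_add hf' (integrable_const ε)]; simp)

lemma integral_mem_Icc (hf : Integrable f μ) (h : ∀ ω, f ω ∈ Icc 0 1) :
    ∫ ω, f ω ∂μ ∈ Icc 0 1 :=
  ⟨integral_nonneg fun ω => (h ω).1,
    (integral_mono hf (integrable_const 1) fun ω => (h ω).2).trans_eq (by simp)⟩

end Averages

section ClusterLoss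

variable {X ι : Type*} [Fintype ι]

lemma sum_sum_mul_le_add {a b : ι → ℝ} (ha₀ : ∀ i, 0 ≤ a i) (hb₀ : ∀ i, 0 ≤ b i)
    (ha : ∑ i, a i = 1) (hb : ∑ i, b i = 1) {f f' : ι → ι → ℝ} {ε : ℝ}
    (h : ∀ i j, f i j ≤ f' i j + ε) :
    ∑ i, ∑ j, a i * b j * f i j ≤ ∑ i, ∑ j, a i * b j * f' i j + ε := by
  calc ∑ i, ∑ j, a i * b j * f i j ≤ ∑ i, ∑ j, a i * b j * (f' i j + ε) := by
        gcongr with i _ j _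
        · exact mul_nonneg (ha₀ i) (hb₀ j)
        · exact h i j
    _ = ∑ i, ∑ j, a i * b j * f' i j + ∑ i, ∑ j, a i * b j * ε := by
        simp only [mul_add, Finset.sum_add_distrib]
    _ = ∑ i, ∑ j, a i * b j * f' i j + ε := by
        simp [← Finset.sum_mul, ← Finset.mul_sum, ha, hb]

/-- The expected quadratic loss of the model `(q, g)` on the weighted edge `z = (x₁, x₂, w)`. -/
def clusterLoss (q : X → ι → ℝ) (g : ι → ι → ℝ) (z : X × X × unitInterval) : ℝ :=
  ∑ c₁, ∑ c₂, q z.1 c₁ * q z.2.1 c₂ * ((z.2.2 : ℝ) - g c₁ c₂) ^ 2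

variable {q : X → ι → ℝ} {g g' : ι → ι → ℝ}

lemma clusterLoss_le_add (hq₀ : ∀ x c, 0 ≤ q x c) (hq : ∀ x, ∑ c, q x c = 1)
    (hg' : ∀ c₁ c₂, g' c₁ c₂ ∈ Icc 0 1) {Δ : ℝ} (hgg' : ∀ c₁ c₂, |g c₁ c₂ - g' c₁ c₂| ≤ Δ / 2)
    (z : X × X × unitInterval) :
    clusterLoss q g z ≤ clusterLoss q g' z + (Δ + Δ ^ 2 / 4) :=
  sum_sum_mul_le_add (hq₀ _) (hq₀ _) (hq _) (hq _) fun c₁ c₂ =>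
    sq_sub_le_sq_sub_add
      ((Real.dist_eq _ _).ge.trans (Real.dist_le_of_mem_Icc_01 z.2.2.2 (hg' c₁ c₂))) (hgg' c₁ c₂)

lemma clusterLoss_mem_Icc (hq₀ : ∀ x c, 0 ≤ q x c) (hq : ∀ x, ∑ c, q x c = 1)
    (hg : ∀ c₁ c₂, g c₁ c₂ ∈ Icc 0 1) (z : X × X × unitInterval) :
    clusterLoss q g z ∈ Icc 0 1 := by
  constructor
  · exact Finset.sum_nonneg fun c₁ _ => Finset.sum_nonneg fun c₂ _ =>
      mul_nonneg (mul_nonneg (hq₀ _ _) (hq₀ _ _)) (sq_nonneg _)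
  · calc clusterLoss q g z ≤ ∑ c₁, ∑ c₂, q z.1 c₁ * q z.2.1 c₂ * 0 + 1 :=
          sum_sum_mul_le_add (hq₀ _) (hq₀ _) (hq _) (hq _) fun c₁ c₂ => by
            rw [zero_add, sq_le_one_iff_abs_le_one]
            exact (Real.dist_eq _ _).ge.trans (Real.dist_le_of_mem_Icc_01 z.2.2.2 (hg c₁ c₂))
      _ = 1 := by simp

lemma measurable_clusterLoss [MeasurableSpace X] [Countable X] [MeasurableSingletonClass X]
    (q : X → ι → ℝ) (g : ι → ι → ℝ) : Measurable (clusterLoss q g) := by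
  unfold clusterLoss
  measurability

lemma integrable_clusterLoss [MeasurableSpace X] [Countable X] [MeasurableSingletonClass X]
    {p : Measure (X × X × unitInterval)} [IsFiniteMeasure p] (hq₀ : ∀ x c, 0 ≤ q x c)
    (hq : ∀ x, ∑ c, q x c = 1) (hg : ∀ c₁ c₂, g c₁ c₂ ∈ Icc 0 1) :
    Integrable (clusterLoss q g) p :=
  .of_mem_Icc 0 1 (measurable_clusterLoss q g).aemeasurable
    (ae_of_all _ (clusterLoss_mem_Icc hq₀ hq hg))

end ClusterLoss

theorem le_klInv_add_of_le_add {L L' Lhat Lhat' ε B : ℝ} (hLhat' : Lhat' ∈ Icc 0 1)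
    (hL' : L' ∈ Icc 0 1) (hLhat : Lhat' ≤ Lhat + ε) (hL : L ≤ L' + ε)
    (h : klBer Lhat' L' ≤ B) : L ≤ klInv (Lhat + ε) B + ε := by
  linarith [le_klInv hLhat' hL' hLhat h]

theorem quantized_graph_clustering_bound_general
    {X : Type*} [Fintype X] [MeasurableSpace X] [MeasurableSingletonClass X]
    (p : Measure (X × X × unitInterval)) [IsProbabilityMeasure p]
    (N : ℕ) (hN : 0 < N) (δ : ℝ) (hδ0 : 0 < δ)
    (nC : ℕ)
    (K : ℕ) (hK : 0 < K) (Δ : ℝ) (hΔ : Δ = 1 / (K : ℝ))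
    -- the grid-valued version of the PAC-Bayesian graph clustering bound
    (hgrid :
      Measure.pi (fun _ : Fin N => p)
        {S : Fin N → X × X × unitInterval |
          ∀ (qC : X → Fin nC → ℝ) (g : Fin nC → Fin nC → ℝ),
            (∀ x c, 0 ≤ qC x c) → (∀ x, (∑ c, qC x c) = 1) →
            (∀ c₁ c₂, ∃ j : Fin K, g c₁ c₂ = (2 * (j : ℝ) + 1) * Δ / 2) →
            klBer
              ((1 / (N : ℝ)) * ∑ t : Fin N, ∑ c₁ : Fin nC, ∑ c₂ : Fin nC,
                qC (S t).1 c₁ * qC (S t).2.1 c₂ * (((S t).2.2 : ℝ) - g c₁ c₂) ^ 2)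
              (∫ z, (∑ c₁ : Fin nC, ∑ c₂ : Fin nC,
                qC z.1 c₁ * qC z.2.1 c₂ * ((z.2.2 : ℝ) - g c₁ c₂) ^ 2) ∂p)
            ≤ ((((Fintype.card X : ℝ) * barMI qC
                  + (nC : ℝ) * Real.log (Fintype.card X)
                  + (nC : ℝ) ^ 2 * Real.log (1 / Δ)
                  + (1 / 2) * Real.log (4 * N) - Real.log δ) / (N : ℝ) : ℝ) : EReal)}
        ≥ ENNReal.ofReal (1 - δ)) :
    Measure.pi (fun _ : Fin N => p)
      {S : Fin N → X × X × unitInterval |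
        ∀ (qC : X → Fin nC → ℝ) (g : Fin nC → Fin nC → ℝ),
          (∀ x c, 0 ≤ qC x c) → (∀ x, (∑ c, qC x c) = 1) →
          (∀ c₁ c₂, g c₁ c₂ ∈ Set.Icc (0 : ℝ) 1) →
          (∫ z, (∑ c₁ : Fin nC, ∑ c₂ : Fin nC,
              qC z.1 c₁ * qC z.2.1 c₂ * ((z.2.2 : ℝ) - g c₁ c₂) ^ 2) ∂p)
            ≤ klInv
                ((1 / (N : ℝ)) * (∑ t : Fin N, ∑ c₁ : Fin nC, ∑ c₂ : Fin nC,
                    qC (S t).1 c₁ * qC (S t).2.1 c₂ * (((S t).2.2 : ℝ) - g c₁ c₂) ^ 2)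
                  + Δ + Δ ^ 2 / 4)
                (((Fintype.card X : ℝ) * barMI qC
                  + (nC : ℝ) * Real.log (Fintype.card X)
                  - (nC : ℝ) ^ 2 * Real.log Δ
                  + (1 / 2) * Real.log (4 * N / δ ^ 2)) / (N : ℝ))
              + Δ + Δ ^ 2 / 4} 
      ≥ ENNReal.ofReal (1 - δ) := by
  refine hgrid.trans (measure_mono fun S hS qC g hq₀ hq hg => ?_)
  choose j hj using fun c₁ c₂ => exists_abs_sub_cell_midpoint_le hK hΔ (hg c₁ c₂)
  set gq : Fin nC → Fin nC → ℝ := fun c₁ c₂ => (2 * (j c₁ c₂ : ℝ) + 1) * Δ / 2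
  have hgq : ∀ c₁ c₂, gq c₁ c₂ ∈ Icc 0 1 := fun c₁ c₂ => cell_midpoint_mem_Icc hΔ (j c₁ c₂)
  have hkl := hS qC gq hq₀ hq fun c₁ c₂ => ⟨j c₁ c₂, rfl⟩
  rw [one_div Δ, log_inv] at hkl
  rw [add_assoc, add_assoc (1 / (N : ℝ) * _)]
  refine le_klInv_add_of_le_add
    (mean_mem_Icc hN fun t => clusterLoss_mem_Icc hq₀ hq hgq (S t))
    (integral_mem_Icc (integrable_clusterLoss hq₀ hq hgq) (clusterLoss_mem_Icc hq₀ hq hgq))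
    (mean_le_mean_add hN fun t => clusterLoss_le_add hq₀ hq hg
      (fun c₁ c₂ => abs_sub_comm (g c₁ c₂) _ ▸ hj c₁ c₂) (S t))
    (integral_le_integral_add (integrable_clusterLoss hq₀ hq hg)
      (integrable_clusterLoss hq₀ hq hgq) (clusterLoss_le_add hq₀ hq hgq hj)) (hkl.trans_eq ?_)
  rw [log_div (by positivity) (by positivity), log_pow]
  congr 1
  push_cast
  ring

/-- Correction of the PAC-Bayesian graph clustering bound for edge weight quantization:
if the bound holds with probability `1 − δ` for all models whose cluster-level
predictions take values in the uniform grid `{Δ/2, 3Δ/2, …, 1 − Δ/2}` with `Δ = 1/K`,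
then with probability `1 − δ`, simultaneously for all models with arbitrary
cluster-level predictions `g : C × C → [0,1]` and quadratic loss,
`L(Q) ≤ kl⁻¹(L̂(Q) + Δ + Δ²/4, (|X|·Ī(X;C) + |C| ln|X| − |C|² ln Δ + ½ ln(4N/δ²))/N)
        + Δ + Δ²/4`. -/
theorem quantized_graph_clustering_bound
    {X : Type*} [Fintype X] [Nonempty X] [MeasurableSpace X] [MeasurableSingletonClass X]
    (p : Measure (X × X × unitInterval)) [IsProbabilityMeasure p]
    (N : ℕ) (hN : 0 < N) (δ : ℝ) (hδ0 : 0 < δ) (hδ1 : δ ≤ 1)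
    (nC : ℕ) (hnC : 0 < nC)
    (K : ℕ) (hK : 0 < K) (Δ : ℝ) (hΔ : Δ = 1 / (K : ℝ))
    -- the grid-valued version of the PAC-Bayesian graph clustering bound
    (hgrid :
      Measure.pi (fun _ : Fin N => p)
        {S : Fin N → X × X × unitInterval |
          ∀ (qC : X → Fin nC → ℝ) (g : Fin nC → Fin nC → ℝ),
            (∀ x c, 0 ≤ qC x c) → (∀ x, (∑ c, qC x c) = 1) →
            (∀ c₁ c₂, ∃ j : Fin K, g c₁ c₂ = (2 * (j : ℝ) + 1) * Δ / 2) →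
            klBer
              ((1 / (N : ℝ)) * ∑ t : Fin N, ∑ c₁ : Fin nC, ∑ c₂ : Fin nC,
                qC (S t).1 c₁ * qC (S t).2.1 c₂ * (((S t).2.2 : ℝ) - g c₁ c₂) ^ 2)
              (∫ z, (∑ c₁ : Fin nC, ∑ c₂ : Fin nC,
                qC z.1 c₁ * qC z.2.1 c₂ * ((z.2.2 : ℝ) - g c₁ c₂) ^ 2) ∂p)
            ≤ ((((Fintype.card X : ℝ) * barMI qC
                  + (nC : ℝ) * Real.log (Fintype.card X)
                  + (nC : ℝ) ^ 2 * Real.log (1 / Δ)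
                  + (1 / 2) * Real.log (4 * N) - Real.log δ) / (N : ℝ) : ℝ) : EReal)}
        ≥ ENNReal.ofReal (1 - δ)) :
    Measure.pi (fun _ : Fin N => p)
      {S : Fin N → X × X × unitInterval |
        ∀ (qC : X → Fin nC → ℝ) (g : Fin nC → Fin nC → ℝ),
          (∀ x c, 0 ≤ qC x c) → (∀ x, (∑ c, qC x c) = 1) →
          (∀ c₁ c₂, g c₁ c₂ ∈ Set.Icc (0 : ℝ) 1) →
          (∫ z, (∑ c₁ : Fin nC, ∑ c₂ : Fin nC,
              qC z.1 c₁ * qC z.2.1 c₂ * ((z.2.2 : ℝ) - g c₁ c₂) ^ 2) ∂p)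
            ≤ klInv
                ((1 / (N : ℝ)) * (∑ t : Fin N, ∑ c₁ : Fin nC, ∑ c₂ : Fin nC,
                    qC (S t).1 c₁ * qC (S t).2.1 c₂ * (((S t).2.2 : ℝ) - g c₁ c₂) ^ 2)
                  + Δ + Δ ^ 2 / 4)
                (((Fintype.card X : ℝ) * barMI qC
                  + (nC : ℝ) * Real.log (Fintype.card X)
                  - (nC : ℝ) ^ 2 * Real.log Δ
                  + (1 / 2) * Real.log (4 * N / δ ^ 2)) / (N : ℝ))
              + Δ + Δ ^ 2 / 4} 
      ≥ ENNReal.ofReal (1 - δ) :=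
  quantized_graph_clustering_bound_general p N hN δ hδ0 nC K hK Δ hΔ hgrid
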